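/- Let 1 < p < ∞, let u₀ : ℝ → ℝ be Lipschitz continuous with compact support, and let w ∈ L^p(ℝ). Suppose there is a constant α ≥ 0 such that the translation stability estimate ‖w(·+h) − w‖_{L^p(ℝ)} ≤ α‖u₀(·+h) − u₀‖_{L^p(ℝ)} holds for every h ∈ ℝ. Then w agrees almost everywhere with a continuous function on ℝ. (Consequently, a solution of a conservation law which develops a genuine jump discontinuity from Lipschitz initial data cannot obey such a translation-invariant L^p stability estimate with p > 1.) -/

import Mathlib

/-!
Hölder's inequality turns the modulus `‖w(· + h) - w‖_p ≤ C |h|`, which the stability estimate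
inherits from the Lipschitz, compactly supported `u₀`, into the bound `C |h| (2r)^(-1/p)` for the
change under translation by `h` of the average `A_r w` of `w` over intervals of length `2r`.
Comparing an interval with its two halves gives `|A_{2r} w - A_r w| ≤ (C/2) (2r)^(1 - 1/p)`, so for
`p > 1` the dyadic averages `A_{2^-n} w`, each Lipschitz, converge uniformly; their continuous limit
agrees with `w` at every Lebesgue point.
-/

open MeasureTheory Metric Set Filter
open scoped ENNReal NNReal Topology

theorem LipschitzWith.eLpNorm_comp_add_sub_le {G E : Type*} [SeminormedAddCommGroup G]
    [MeasurableSpace G] [MeasurableAdd G] [NormedAddCommGroup E] {μ : Measure G}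
    [μ.IsAddRightInvariant] [IsFiniteMeasureOnCompacts μ] {L : ℝ≥0} {u : G → E}
    (hu : LipschitzWith L u) (hsupp : HasCompactSupport u) (p : ℝ≥0∞) :
    ∃ K : ℝ≥0, ∀ h : G, eLpNorm (fun x => u (x + h) - u x) p μ ≤ K * ‖h‖ₑ := by
  set T := tsupport u
  refine ⟨((2 * μ T) ^ p.toReal⁻¹).toNNReal * L, fun h => ?_⟩
  set s := T ∪ (· + h) ⁻¹' T
  have hsupport : (Function.support fun x => u (x + h) - u x) ⊆ s := by
    intro x hx
    by_contra hxs
    simp only [s, mem_union, mem_preimage, not_or] at hxs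
    exact hx (by simp only [image_eq_zero_of_notMem_tsupport hxs.1,
      image_eq_zero_of_notMem_tsupport hxs.2, sub_zero])
  have hbound : ∀ x, ‖u (x + h) - u x‖ₑ ≤ L * ‖h‖ₑ := fun x => by
    simpa [edist_eq_enorm_sub] using hu.edist_le_mul (x + h) x
  have hs : μ s ≤ 2 * μ T :=
    calc μ s ≤ μ T + μ ((· + h) ⁻¹' T) := measure_union_le _ _
      _ = 2 * μ T := by rw [measure_preimage_add_right, two_mul]
  rw [← eLpNorm_restrict_eq_of_support_subset hsupport]
  calc eLpNorm (fun x => u (x + h) - u x) p (μ.restrict s)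
      ≤ L * ‖h‖ₑ * μ s ^ p.toReal⁻¹ := by
        simpa using eLpNorm_le_of_ae_enorm_bound (μ := μ.restrict s) (p := p)
          (Eventually.of_forall hbound)
    _ ≤ L * ‖h‖ₑ * (2 * μ T) ^ p.toReal⁻¹ := by gcongr
    _ = _ := by
        rw [ENNReal.coe_mul, ENNReal.coe_toNNReal]
        · ring
        · exact ENNReal.rpow_ne_top_of_nonneg (by positivity)
            (ENNReal.mul_ne_top (by simp) hsupp.measure_lt_top.ne)

theorem enorm_integral_le_eLpNorm_mul_measure_univ_rpow {α E : Type*} [MeasurableSpace α]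
    {μ : Measure α} [NormedAddCommGroup E] [NormedSpace ℝ E] {f : α → E} {p : ℝ≥0∞}
    (hp : 1 ≤ p) (hf : AEStronglyMeasurable f μ) :
    ‖∫ x, f x ∂μ‖ₑ ≤ eLpNorm f p μ * μ univ ^ (1 - p.toReal⁻¹) :=
  calc ‖∫ x, f x ∂μ‖ₑ ≤ ∫⁻ x, ‖f x‖ₑ ∂μ := enorm_integral_le_lintegral_enorm f
    _ = eLpNorm f 1 μ := eLpNorm_one_eq_lintegral_enorm.symm
    _ ≤ _ := by simpa using eLpNorm_le_eLpNorm_mul_rpow_measure_univ hp hf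

section CenteredAverage

variable {E : Type*} [NormedAddCommGroup E] [NormedSpace ℝ E] {w : ℝ → E}

noncomputable def centeredAverage (w : ℝ → E) (r x : ℝ) : E :=
  (2 * r)⁻¹ • ∫ t in (x - r)..(x + r), w t

theorem setAverage_closedBall_eq_centeredAverage (w : ℝ → E) (x : ℝ) {r : ℝ} (hr : 0 < r) :
    ⨍ y in closedBall x r, w y = centeredAverage w r x := by
  rw [setAverage_eq, Real.volume_real_closedBall hr.le, Real.closedBall_eq_Icc,
    integral_Icc_eq_integral_Ioc, centeredAverage, intervalIntegral.integral_of_le (by linarith)]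

theorem centeredAverage_two_mul (hw : LocallyIntegrable w volume) (r x : ℝ) :
    centeredAverage w (2 * r) x =
      (2 : ℝ)⁻¹ • (centeredAverage w r (x - r) + centeredAverage w r (x + r)) := by
  have hint (a b : ℝ) : IntervalIntegrable w volume a b :=
    (hw.integrableOn_isCompact isCompact_uIcc).intervalIntegrable
  simp only [centeredAverage, sub_sub, sub_add_cancel, add_sub_cancel_right, add_assoc,
    ← two_mul, ← smul_add, smul_smul,
    intervalIntegral.integral_add_adjacent_intervals (hint _ _) (hint _ _)]
  congr 1
  ring

theorem norm_centeredAverage_add_sub_le (hw : LocallyIntegrable w volume) {p : ℝ≥0∞}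
    (hp : 1 ≤ p) {C : ℝ≥0} {h : ℝ}
    (hD : eLpNorm (fun x => w (x + h) - w x) p volume ≤ C * ‖h‖ₑ) (x : ℝ) {r : ℝ} (hr : 0 < r) :
    ‖centeredAverage w r (x + h) - centeredAverage w r x‖ ≤
      (2 * r)⁻¹ * (C * |h| * (2 * r) ^ (1 - p.toReal⁻¹)) := by
  set f : ℝ → E := fun t => w (t + h) - w t
  have hint (a b : ℝ) : IntervalIntegrable w volume a b :=
    (hw.integrableOn_isCompact isCompact_uIcc).intervalIntegrable
  have hdiff : centeredAverage w r (x + h) - centeredAverage w r x =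
      (2 * r)⁻¹ • ∫ t in (x - r)..(x + r), f t := by
    have hshift : ∫ t in (x + h - r)..(x + h + r), w t = ∫ t in (x - r)..(x + r), w (t + h) := by
      rw [intervalIntegral.integral_comp_add_right w h]
      congr 1 <;> ring
    have hint' : IntervalIntegrable (fun t => w (t + h)) volume (x - r) (x + r) := by
      simpa using (hint (x - r + h) (x + r + h)).comp_add_right h
    rw [centeredAverage, centeredAverage, ← smul_sub, hshift,
      ← intervalIntegral.integral_sub hint' (hint _ _)]
  have hf : AEStronglyMeasurable f volume :=
    (hw.aestronglyMeasurable.comp_measurePreserving (measurePreserving_add_right volume h)).sub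
      hw.aestronglyMeasurable
  have hholder : ‖∫ t in (x - r)..(x + r), f t‖ₑ ≤
      C * ‖h‖ₑ * ENNReal.ofReal (2 * r) ^ (1 - p.toReal⁻¹) := by
    rw [intervalIntegral.integral_of_le (by linarith)]
    refine (enorm_integral_le_eLpNorm_mul_measure_univ_rpow hp hf.restrict).trans ?_
    rw [Measure.restrict_apply_univ, Real.volume_Ioc, show x + r - (x - r) = 2 * r by ring]
    gcongr
    exact (eLpNorm_mono_measure f Measure.restrict_le_self).trans hD
  have hreal : ‖∫ t in (x - r)..(x + r), f t‖ ≤ C * |h| * (2 * r) ^ (1 - p.toReal⁻¹) := by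
    have := ENNReal.toReal_mono (by finiteness) hholder
    simpa [ENNReal.toReal_mul, ← ENNReal.toReal_rpow, hr.le] using this
  rw [hdiff, norm_smul, Real.norm_of_nonneg (by positivity)]
  gcongr

variable {p : ℝ≥0∞} {C : ℝ≥0}

theorem dist_centeredAverage_two_mul_le (hw : LocallyIntegrable w volume) (hp : 1 ≤ p)
    (hD : ∀ h : ℝ, eLpNorm (fun x => w (x + h) - w x) p volume ≤ C * ‖h‖ₑ) (x : ℝ) {r : ℝ}
    (hr : 0 < r) :
    dist (centeredAverage w (2 * r) x) (centeredAverage w r x) ≤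
      C / 2 * (2 * r) ^ (1 - p.toReal⁻¹) := by
  have hshift (h : ℝ) := norm_centeredAverage_add_sub_le hw hp (hD h) x hr
  have hleft := hshift (-r)
  have hright := hshift r
  rw [← sub_eq_add_neg, abs_neg, abs_of_pos hr] at hleft
  rw [abs_of_pos hr] at hright
  rw [dist_eq_norm, centeredAverage_two_mul hw, show ∀ a b c : E, (2 : ℝ)⁻¹ • (a + b) - c =
    (2 : ℝ)⁻¹ • ((a - c) + (b - c)) by intros; module, norm_smul]
  calc ‖(2 : ℝ)⁻¹‖ * ‖(centeredAverage w r (x - r) - centeredAverage w r x) +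
        (centeredAverage w r (x + r) - centeredAverage w r x)‖
      ≤ 2⁻¹ * ((2 * r)⁻¹ * (C * r * (2 * r) ^ (1 - p.toReal⁻¹)) +
          (2 * r)⁻¹ * (C * r * (2 * r) ^ (1 - p.toReal⁻¹))) := by
        rw [Real.norm_of_nonneg (by norm_num)]
        gcongr
        exact norm_add_le_of_le hleft hright
    _ = C / 2 * (2 * r) ^ (1 - p.toReal⁻¹) := by field_simp; ring

theorem continuous_centeredAverage (hw : LocallyIntegrable w volume) (hp : 1 ≤ p)
    (hD : ∀ h : ℝ, eLpNorm (fun x => w (x + h) - w x) p volume ≤ C * ‖h‖ₑ) {r : ℝ}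
    (hr : 0 < r) : Continuous (centeredAverage w r) := by
  set K : ℝ := (2 * r)⁻¹ * (C * (2 * r) ^ (1 - p.toReal⁻¹))
  refine (LipschitzWith.of_dist_le_mul (K := K.toNNReal) fun y x => ?_).continuous
  have := norm_centeredAverage_add_sub_le hw hp (hD (y - x)) x hr
  rw [add_sub_cancel] at this
  rw [dist_eq_norm, Real.coe_toNNReal _ (by positivity), Real.dist_eq]
  linarith

end CenteredAverage

theorem exists_tendstoUniformly_of_dist_le_geometric {α E : Type*} [PseudoMetricSpace E]
    [CompleteSpace E] {F : ℕ → α → E} {c r : ℝ} (hr₀ : 0 ≤ r) (hr₁ : r < 1)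
    (hF : ∀ n x, dist (F n x) (F (n + 1) x) ≤ c * r ^ n) :
    ∃ g : α → E, TendstoUniformly F g atTop := by
  choose g hg using fun x =>
    cauchySeq_tendsto_of_complete (cauchySeq_of_le_geometric r c hr₁ (hF · x))
  refine ⟨g, Metric.tendstoUniformly_iff.2 fun ε hε => ?_⟩
  have htail : Tendsto (fun n => c * r ^ n / (1 - r)) atTop (𝓝 0) := by
    simpa using ((tendsto_pow_atTop_nhds_zero_of_lt_one hr₀ hr₁).const_mul c).div_const (1 - r)
  filter_upwards [htail.eventually (gt_mem_nhds hε)] with n hn x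
  rw [dist_comm]
  exact (dist_le_of_le_geometric_of_tendsto r c hr₁ (hF · x) (hg x) n).trans_lt hn

theorem one_sub_inv_toReal_pos {p : ℝ≥0∞} (hp : 1 < p) : 0 < 1 - p.toReal⁻¹ := by
  rcases eq_or_ne p ⊤ with rfl | hp_top
  · simp
  · have : 1 < p.toReal := by simpa using (ENNReal.toReal_lt_toReal ENNReal.one_ne_top hp_top).2 hp
    linarith [inv_lt_one_of_one_lt₀ this]

theorem exists_continuous_ae_eq_of_eLpNorm_comp_add_sub_le {E : Type*} [NormedAddCommGroup E]
    [NormedSpace ℝ E] [CompleteSpace E] {w : ℝ → E} (hw : LocallyIntegrable w volume)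
    {p : ℝ≥0∞} (hp : 1 < p) {C : ℝ≥0}
    (hD : ∀ h : ℝ, eLpNorm (fun x => w (x + h) - w x) p volume ≤ C * ‖h‖ₑ) :
    ∃ g : ℝ → E, Continuous g ∧ w =ᵐ[volume] g := by
  set ρ : ℝ := (1 / 2) ^ (1 - p.toReal⁻¹)
  have hρ₀ : 0 ≤ ρ := by positivity
  have hρ₁ : ρ < 1 := Real.rpow_lt_one (by norm_num) (by norm_num) (one_sub_inv_toReal_pos hp)
  have hgeo (n : ℕ) (x : ℝ) : dist (centeredAverage w ((1 / 2) ^ n) x)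
      (centeredAverage w ((1 / 2) ^ (n + 1)) x) ≤ C / 2 * ρ ^ n := by
    have := dist_centeredAverage_two_mul_le hw hp.le hD x (r := (1 / 2) ^ (n + 1)) (by positivity)
    rwa [show 2 * (1 / 2 : ℝ) ^ (n + 1) = (1 / 2) ^ n by ring,
      ← Real.rpow_pow_comm (by norm_num)] at this
  obtain ⟨g, hg⟩ := exists_tendstoUniformly_of_dist_le_geometric hρ₀ hρ₁ hgeo
  refine ⟨g, hg.continuous (Frequently.of_forall fun n =>
    continuous_centeredAverage hw hp.le hD (by positivity)), ?_⟩
  filter_upwards [IsUnifLocDoublingMeasure.ae_tendsto_average (μ := volume) hw 1] with x hx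
  have hrad : Tendsto (fun n : ℕ => (1 / 2 : ℝ) ^ n) atTop (𝓝[>] 0) :=
    tendsto_nhdsWithin_of_tendsto_nhds_of_eventually_within _
      (tendsto_pow_atTop_nhds_zero_of_lt_one (by norm_num) (by norm_num))
      (Eventually.of_forall fun n => mem_Ioi.2 (by positivity))
  have := hx (fun _ => x) _ hrad
    (Eventually.of_forall fun n => mem_closedBall_self (by positivity : (0 : ℝ) ≤ 1 * (1 / 2) ^ n))
  simp_rw [setAverage_closedBall_eq_centeredAverage w x (pow_pos one_half_pos _)] at this
  exact tendsto_nhds_unique this (hg.tendsto_at x)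

theorem lp_translation_stability_implies_continuous_representative
    (p : ℝ) (hp : 1 < p)
    (u₀ : ℝ → ℝ) (L : NNReal) (hu₀ : LipschitzWith L u₀)
    (hsupp : HasCompactSupport u₀)
    (w : ℝ → ℝ) (hw : MemLp w (ENNReal.ofReal p) (volume : Measure ℝ))
    (α : ℝ)
    (hstab : ∀ h : ℝ,
      eLpNorm (fun x => w (x + h) - w x) (ENNReal.ofReal p) (volume : Measure ℝ)
        ≤ ENNReal.ofReal α *
          eLpNorm (fun x => u₀ (x + h) - u₀ x) (ENNReal.ofReal p) (volume : Measure ℝ)) :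
    ∃ g : ℝ → ℝ, Continuous g ∧ w =ᵐ[volume] g := by
  have hp' : 1 < ENNReal.ofReal p := ENNReal.one_lt_ofReal.2 hp
  obtain ⟨K, hK⟩ := hu₀.eLpNorm_comp_add_sub_le hsupp (μ := volume) (ENNReal.ofReal p)
  refine exists_continuous_ae_eq_of_eLpNorm_comp_add_sub_le (hw.locallyIntegrable hp'.le) hp'
    (C := α.toNNReal * K) fun h => ?_
  calc eLpNorm (fun x => w (x + h) - w x) (ENNReal.ofReal p) volume
      ≤ ENNReal.ofReal α * eLpNorm (fun x => u₀ (x + h) - u₀ x) (ENNReal.ofReal p) volume :=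
        hstab h
    _ ≤ ENNReal.ofReal α * (K * ‖h‖ₑ) := by gcongr; exact hK h
    _ = ↑(α.toNNReal * K) * ‖h‖ₑ := by rw [ENNReal.coe_mul, ← mul_assoc]; rfl
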